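/- arXiv:2211.02844 — 6 statements merged into one kernel-verified Lean document; each statement's English description precedes it below -/
import Mathlib

section
/- Let r, ℓ > 0 with r ≠ ℓ, and let ρ ∈ (0,1). Set β = (r+ω)(1−ρ) and δ = (ℓ+ω)ρ for some real ω with β, δ > 0. Then κ₊(β,δ) = ρ/(1−ρ) = z(ρ), independently of ω. -/
/-!
κ₊(x, y) is the larger root of `x κ² - (y - x + r - ℓ) κ - y = 0`. For `x = β`, `y = δ` the fugacity
`z = ρ / (1 - ρ)` is a root of this quadratic for every `ω`; it is positive, and the product of the
roots is `-δ / β < 0`, so it is the larger one.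
-/

theorem quadratic_formula_eq_of_pos_root {a b c k : ℝ} (ha : 0 < a) (hc : 0 ≤ c) (hk : 0 < k)
    (hroot : a * k ^ 2 - b * k = c) :
    1 / (2 * a) * (b + √(b ^ 2 + 4 * a * c)) = k := by
  have hvertex : 0 ≤ 2 * a * k - b := by
    have : 2 * a * k - b = a * k + c / k := by
      field_simp
      linear_combination hroot
    rw [this]
    positivity
  have hdisc : b ^ 2 + 4 * a * c = (2 * a * k - b) ^ 2 := by
    linear_combination -4 * a * hroot
  rw [hdisc, Real.sqrt_sq hvertex]
  field_simp
  ring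

theorem fugacity_isRoot_kappa_quadratic (r ℓ ω : ℝ) {ρ : ℝ} (hρ : ρ ≠ 1) :
    (r + ω) * (1 - ρ) * (ρ / (1 - ρ)) ^ 2
        - ((ℓ + ω) * ρ - (r + ω) * (1 - ρ) + r - ℓ) * (ρ / (1 - ρ)) = (ℓ + ω) * ρ := by
  have : 1 - ρ ≠ 0 := sub_ne_zero.mpr hρ.symm
  field_simp
  ring

theorem kappaPlus_right_boundary_general (r ℓ ω ρ β δ : ℝ)
    (hρ0 : 0 < ρ) (hρ1 : ρ < 1)
    (hβ : β = (r + ω) * (1 - ρ)) (hδ : δ = (ℓ + ω) * ρ)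
    (hβpos : 0 < β) (hδpos : 0 < δ) :
    (1/(2*β)) * (δ - β + r - ℓ + Real.sqrt ((δ - β + r - ℓ)^2 + 4*β*δ)) = ρ / (1 - ρ) := by
  have hroot := fugacity_isRoot_kappa_quadratic r ℓ ω hρ1.ne
  rw [← hβ, ← hδ] at hroot
  exact quadratic_formula_eq_of_pos_root hβpos hδpos.le (div_pos hρ0 (sub_pos.mpr hρ1)) hroot

theorem kappaPlus_right_boundary (r ℓ ω ρ β δ : ℝ) (hr : 0 < r) (hl : 0 < ℓ) (hrl : r ≠ ℓ)
    (hρ0 : 0 < ρ) (hρ1 : ρ < 1)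
    (hβ : β = (r + ω) * (1 - ρ)) (hδ : δ = (ℓ + ω) * ρ)
    (hβpos : 0 < β) (hδpos : 0 < δ) :
    (1/(2*β)) * (δ - β + r - ℓ + Real.sqrt ((δ - β + r - ℓ)^2 + 4*β*δ)) = ρ / (1 - ρ) :=
  kappaPlus_right_boundary_general r ℓ ω ρ β δ hρ0 hρ1 hβ hδ hβpos hδpos
end

section
/- Let α, γ, r, ℓ > 0 with r ≠ ℓ, and consider the matrix h⁻ with rows (α, −γ) and (−α, γ + r − ℓ). Then the vector a = (a₀, a₁) with a₀, a₁ > 0 is an eigenvector of h⁻ if and only if the fugacity z = a₁/a₀ satisfies the quadratic equation z² + ((γ − α + r − ℓ)/γ)·z − α/γ = 0, and in that case the eigenvalue equals α − γz = (r − ℓ)·z/(1 + z). -/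
/-!
The first row of the eigenvalue equation gives `λ = α - γ z` once divided by `a₀`; substituting
this into the second row and dividing by `a₀²` leaves a quadratic in the fugacity `z`. Since the
first column of `h⁻` sums to zero, adding the two rows gives `λ (a₀ + a₁) = (r - ℓ) a₁`, which is
the second expression for the eigenvalue.
-/

namespace Matrix

theorem mulVec_fin_two_eq_smul_iff {R : Type*} [CommRing R] {p q s t x y c : R} :
    !![p, q; s, t] *ᵥ ![x, y] = c • ![x, y] ↔ p * x + q * y = c * x ∧ s * x + t * y = c * y := by
  simp [funext_iff, Fin.forall_fin_two, mul_comm]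

variable {K : Type*} [Field K] {p q s t x y c : K}

theorem eigenvalue_eq_of_mulVec_fin_two_eq_smul (hx : x ≠ 0)
    (h : !![p, q; s, t] *ᵥ ![x, y] = c • ![x, y]) : c = p + q * (y / x) := by
  have h₀ := (mulVec_fin_two_eq_smul_iff.1 h).1
  field_simp
  linear_combination -h₀

theorem exists_mulVec_fin_two_eq_smul_iff (hx : x ≠ 0) :
    (∃ c : K, !![p, q; s, t] *ᵥ ![x, y] = c • ![x, y]) ↔
      q * (y / x) ^ 2 + (p - t) * (y / x) - s = 0 := by
  constructor
  · rintro ⟨c, h⟩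
    obtain ⟨h₀, h₁⟩ := mulVec_fin_two_eq_smul_iff.1 h
    field_simp
    linear_combination y * h₀ - x * h₁
  · intro hq
    refine ⟨p + q * (y / x), mulVec_fin_two_eq_smul_iff.2 ⟨by field_simp, ?_⟩⟩
    field_simp at hq ⊢
    linear_combination -hq

theorem eigenvalue_eq_of_mulVec_fin_two_eq_smul_of_add_eq_zero (hps : p + s = 0) (hx : x ≠ 0)
    (hxy : x + y ≠ 0) (h : !![p, q; s, t] *ᵥ ![x, y] = c • ![x, y]) :
    c = (q + t) * (y / x) / (1 + y / x) := by
  obtain ⟨h₀, h₁⟩ := mulVec_fin_two_eq_smul_iff.1 h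
  have h1z : 1 + y / x ≠ 0 := by rwa [one_add_div hx, div_ne_zero_iff, and_iff_left hx]
  field_simp
  linear_combination x * hps - h₀ - h₁

end Matrix

open Matrix

theorem left_boundary_eigenvector_iff_general (α γ r ℓ a₀ a₁ : ℝ)
    (hγ : 0 < γ)
    (ha₀ : 0 < a₀) (ha₁ : 0 < a₁)
    (hm : Matrix (Fin 2) (Fin 2) ℝ) (hhm : hm = !![α, -γ; -α, γ + r - ℓ])
    (z : ℝ) (hz : z = a₁ / a₀) :
    ((∃ lam : ℝ, hm.mulVec ![a₀, a₁] = lam • ![a₀, a₁]) ↔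
      z^2 + ((γ - α + r - ℓ)/γ) * z - α/γ = 0) ∧
    (∀ lam : ℝ, hm.mulVec ![a₀, a₁] = lam • ![a₀, a₁] →
      lam = α - γ * z ∧ α - γ * z = (r - ℓ) * z / (1 + z)) := by
  subst hhm hz
  have hquad : -γ * ((a₁ / a₀) ^ 2 + ((γ - α + r - ℓ) / γ) * (a₁ / a₀) - α / γ) =
      -γ * (a₁ / a₀) ^ 2 + (α - (γ + r - ℓ)) * (a₁ / a₀) - -α := by
    field_simp
    ring
  refine ⟨?_, fun lam h => ?_⟩
  · rw [exists_mulVec_fin_two_eq_smul_iff ha₀.ne', ← hquad, mul_eq_zero,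
      or_iff_right (neg_ne_zero.2 hγ.ne')]
  · have hlam : lam = α - γ * (a₁ / a₀) := by
      rw [eigenvalue_eq_of_mulVec_fin_two_eq_smul ha₀.ne' h]
      ring
    have hcol := eigenvalue_eq_of_mulVec_fin_two_eq_smul_of_add_eq_zero (add_neg_cancel α)
      ha₀.ne' (by positivity) h
    refine ⟨hlam, ?_⟩
    rw [← hlam, hcol]
    ring

theorem left_boundary_eigenvector_iff (α γ r ℓ a₀ a₁ : ℝ)
    (hα : 0 < α) (hγ : 0 < γ) (hr : 0 < r) (hl : 0 < ℓ) (hrl : r ≠ ℓ)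
    (ha₀ : 0 < a₀) (ha₁ : 0 < a₁)
    (hm : Matrix (Fin 2) (Fin 2) ℝ) (hhm : hm = !![α, -γ; -α, γ + r - ℓ])
    (z : ℝ) (hz : z = a₁ / a₀) :
    ((∃ lam : ℝ, hm.mulVec ![a₀, a₁] = lam • ![a₀, a₁]) ↔
      z^2 + ((γ - α + r - ℓ)/γ) * z - α/γ = 0) ∧
    (∀ lam : ℝ, hm.mulVec ![a₀, a₁] = lam • ![a₀, a₁] →
      lam = α - γ * z ∧ α - γ * z = (r - ℓ) * z / (1 + z)) :=
  left_boundary_eigenvector_iff_general α γ r ℓ a₀ a₁ hγ ha₀ ha₁ hm hhm z hz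
end

section
/- Let r, ℓ > 0 with q² = r/ℓ ≠ 1, and let ρ, ρ' ∈ (0,1) be densities with fugacities related by z(ρ')/z(ρ) = q², where z(σ) = σ/(1−σ). Define d(a,b) = (r−ℓ)·a₁a₀/Δ(a,b) with a = (1−ρ, ρ), b = (1−ρ', ρ'). Then d(ρ,ρ') = ℓ·(1−ρ)/(1−ρ') = r·ρ/ρ' = ℓ(1−ρ) + rρ, and −d(ρ',ρ) = ℓ·ρ'/ρ = r·(1−ρ')/(1−ρ) = r(1−ρ') + ℓρ'. -/
theorem shock_jump_rate_identities (r ℓ ρ ρ' : ℝ)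
    (hr : 0 < r) (hl : 0 < ℓ) (hq : r / ℓ ≠ 1)
    (hρ : ρ ∈ Set.Ioo (0:ℝ) 1) (hρ' : ρ' ∈ Set.Ioo (0:ℝ) 1)
    (hfug : ρ' / (1 - ρ') = (r / ℓ) * (ρ / (1 - ρ)))
    (Δ Δ' d d' : ℝ)
    (hΔ : Δ = (1 - ρ) * ρ' - ρ * (1 - ρ'))
    (hΔ' : Δ' = (1 - ρ') * ρ - ρ' * (1 - ρ))
    (hd : d = (r - ℓ) * (ρ * (1 - ρ)) / Δ)
    (hd' : d' = (r - ℓ) * (ρ' * (1 - ρ')) / Δ') :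
    (d = ℓ * (1 - ρ) / (1 - ρ') ∧ d = r * ρ / ρ' ∧ d = ℓ * (1 - ρ) + r * ρ) ∧
    (-d' = ℓ * ρ' / ρ ∧ -d' = r * (1 - ρ') / (1 - ρ) ∧ -d' = r * (1 - ρ') + ℓ * ρ') := by
  obtain ⟨h1, h2⟩ := hρ
  obtain ⟨h1', h2'⟩ := hρ'
  have e1 : (1:ℝ) - ρ ≠ 0 := by linarith
  have e2 : (1:ℝ) - ρ' ≠ 0 := by linarith
  have e3 : ρ ≠ 0 := ne_of_gt h1
  have e4 : ρ' ≠ 0 := ne_of_gt h1'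
  have hl0 : ℓ ≠ 0 := ne_of_gt hl
  have hkey : ℓ * (ρ' * (1 - ρ)) = r * (ρ * (1 - ρ')) := by
    field_simp at hfug
    linarith [hfug]
  have hΔne : Δ ≠ 0 := by
    intro h
    apply hq
    have hρρ : ρ' = ρ := by
      rw [hΔ] at h; nlinarith
    have : ℓ * (ρ * (1 - ρ)) = r * (ρ * (1 - ρ)) := by rw [← hρρ] at hkey ⊢; linarith [hkey]
    have hrl : r = ℓ := by
      have hne : ρ * (1 - ρ) ≠ 0 := mul_ne_zero e3 e1
      have := mul_right_cancel₀ hne this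
      linarith
    rw [hrl]; field_simp
  have hΔ'ne : Δ' ≠ 0 := by
    rw [hΔ']; rw [hΔ] at hΔne; intro h; apply hΔne; linarith
  have hΔeq : Δ = ρ' - ρ := by rw [hΔ]; ring
  have hΔ'eq : Δ' = ρ - ρ' := by rw [hΔ']; ring
  have hA : d = ℓ * (1 - ρ) + r * ρ := by
    rw [hd, div_eq_iff hΔne, hΔeq]; linear_combination -hkey
  have hne' : ρ - ρ' ≠ 0 := hΔ'eq ▸ hΔ'ne
  have hB : -d' = r * (1 - ρ') + ℓ * ρ' := by
    rw [hd', hΔ'eq, ← neg_div, div_eq_iff hne']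
    linear_combination hkey
  refine ⟨⟨?_, ?_, hA⟩, ?_, ?_, hB⟩
  · rw [hA, eq_div_iff e2]; linear_combination -hkey
  · rw [hA, eq_div_iff e4]; linear_combination hkey
  · rw [hB, eq_div_iff e3]; linear_combination -hkey
  · rw [hB, eq_div_iff e1]; linear_combination hkey
end

section
/- The N-particle shock exclusion process on {L₋,…,L₊} with reflecting boundaries, where particle i jumps left with rate dˡᵢ and right with rate dʳᵢ subject to single-file exclusion (x₁ < x₂ < … < x_N), is reversible with respect to the unnormalized measure π(x₁,…,x_N) = ∏ᵢ dᵢ^{2xᵢ}, where dᵢ = sqrt(dʳᵢ/dˡᵢ). That is, π(x)·Q(x,y) = π(y)·Q(y,x) for all ordered configurations x, y. -/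
lemma shock_aux_plus_plus {N : ℕ} (x y : Fin N → ℤ) (i k : Fin N) (hk : k ≠ i)
    (h1 : y = fun j => x j + if j = i then 1 else 0)
    (h2 : y = fun j => x j + if j = k then 1 else 0) : False := by
  have e1 := congrFun h1 k
  have e2 := congrFun h2 k
  simp only [if_pos rfl, if_neg hk, if_true, eq_self_iff_true] at e1 e2
  omega

lemma shock_aux_minus_minus {N : ℕ} (x y : Fin N → ℤ) (i k : Fin N) (hk : k ≠ i)
    (h1 : y = fun j => x j - if j = i then 1 else 0)
    (h2 : y = fun j => x j - if j = k then 1 else 0) : False := by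
  have e1 := congrFun h1 k
  have e2 := congrFun h2 k
  simp only [if_pos rfl, if_neg hk, if_true, eq_self_iff_true] at e1 e2
  omega

lemma shock_aux_plus_minus {N : ℕ} (x y : Fin N → ℤ) (i k : Fin N)
    (h1 : y = fun j => x j + if j = i then 1 else 0)
    (h2 : y = fun j => x j - if j = k then 1 else 0) : False := by
  have e1 := congrFun h1 i
  have e2 := congrFun h2 i
  simp only [if_pos rfl, if_true, eq_self_iff_true] at e1
  have ht : (if i = k then (1:ℤ) else 0) = 0 ∨ (if i = k then (1:ℤ) else 0) = 1 := by
    split <;> simp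
  rcases ht with ht | ht <;> rw [ht] at e2 <;> omega

theorem shock_exclusion_reversible (N : ℕ) (hN : 0 < N) (Lm Lp : ℤ) (hL : Lm ≤ Lp)
    (dr dl : Fin N → ℝ) (hdr : ∀ i, 0 < dr i) (hdl : ∀ i, 0 < dl i)
    (d : Fin N → ℝ) (hd : ∀ i, d i = Real.sqrt (dr i / dl i))
    (valid : (Fin N → ℤ) → Prop)
    (hvalid : ∀ x, valid x ↔ StrictMono x ∧ ∀ i, Lm ≤ x i ∧ x i ≤ Lp)
    (π : (Fin N → ℤ) → ℝ)
    (hπ : ∀ x, π x = ∏ i, (d i) ^ (2 * x i))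
    (Q : (Fin N → ℤ) → (Fin N → ℤ) → ℝ)
    (hQ : ∀ x y, Q x y =
      (∑ i, (if y = (fun j => x j + if j = i then 1 else 0) then dr i else 0)) +
      (∑ i, (if y = (fun j => x j - if j = i then 1 else 0) then dl i else 0))) :
    ∀ x y, valid x → valid y → π x * Q x y = π y * Q y x := by
  intro x y _ _
  have hd0 : ∀ i, 0 < d i := by
    intro i; rw [hd i]; exact Real.sqrt_pos.mpr (div_pos (hdr i) (hdl i))
  have hdsq : ∀ i, d i ^ (2:ℤ) = dr i / dl i := by
    intro i
    rw [hd i, show ((2:ℤ)) = ((2:ℕ):ℤ) by norm_num, zpow_natCast]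
    exact Real.sq_sqrt (le_of_lt (div_pos (hdr i) (hdl i)))
  have hπp : ∀ (z : Fin N → ℤ) (i), π (fun j => z j + if j = i then 1 else 0)
      = π z * (dr i / dl i) := by
    intro z i
    have key : ∀ j, d j ^ (2 * (z j + if j = i then (1:ℤ) else 0))
        = d j ^ (2 * z j) * (if j = i then d j ^ (2:ℤ) else 1) := by
      intro j
      by_cases h : j = i
      · rw [if_pos h, if_pos h, mul_add, mul_one, zpow_add₀ (ne_of_gt (hd0 j))]
      · simp [h]
    rw [hπ, hπ]
    simp only [key]
    rw [Finset.prod_mul_distrib, ← hdsq i]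
    congr 1
    simp
  have hequiv : ∀ (a b : Fin N → ℤ) (i : Fin N),
      (b = fun j => a j + if j = i then (1:ℤ) else 0)
      ↔ (a = fun j => b j - if j = i then 1 else 0) := by
    intro a b i
    constructor <;> intro h <;> funext j <;> simp [h]
  have hcancel : ∀ i, dr i / dl i * dl i = dr i :=
    fun i => div_mul_cancel₀ _ (ne_of_gt (hdl i))
  rw [hQ, hQ]
  by_cases h1 : ∃ i, y = fun j => x j + if j = i then (1:ℤ) else 0
  · obtain ⟨i, hi⟩ := h1
    have hxy : x = fun j => y j - if j = i then (1:ℤ) else 0 := (hequiv x y i).mp hi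
    have s1 : (∑ k, (if y = (fun j => x j + if j = k then (1:ℤ) else 0) then dr k else 0)) = dr i := by
      rw [Finset.sum_eq_single_of_mem i (Finset.mem_univ i)]
      · rw [if_pos hi]
      · exact fun k _ hk => if_neg fun hk' => shock_aux_plus_plus x y i k hk hi hk'
    have s2 : (∑ k, (if y = (fun j => x j - if j = k then (1:ℤ) else 0) then dl k else 0)) = 0 :=
      Finset.sum_eq_zero fun k _ => if_neg fun hk' => shock_aux_plus_minus x y i k hi hk'
    have s3 : (∑ k, (if x = (fun j => y j + if j = k then (1:ℤ) else 0) then dr k else 0)) = 0 :=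
      Finset.sum_eq_zero fun k _ => if_neg fun hk' =>
        shock_aux_plus_minus y x k i hk' hxy
    have s4 : (∑ k, (if x = (fun j => y j - if j = k then (1:ℤ) else 0) then dl k else 0)) = dl i := by
      rw [Finset.sum_eq_single_of_mem i (Finset.mem_univ i)]
      · rw [if_pos hxy]
      · exact fun k _ hk => if_neg fun hk' => shock_aux_minus_minus y x i k hk hxy hk'
    rw [s1, s2, s3, s4, add_zero, zero_add]
    rw [hi, hπp x i, mul_assoc, hcancel i]
  · by_cases h2 : ∃ i, y = fun j => x j - if j = i then (1:ℤ) else 0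
    · obtain ⟨i, hi⟩ := h2
      have hyx : x = fun j => y j + if j = i then (1:ℤ) else 0 := (hequiv y x i).mpr hi
      have s1 : (∑ k, (if y = (fun j => x j + if j = k then (1:ℤ) else 0) then dr k else 0)) = 0 :=
        Finset.sum_eq_zero fun k _ => if_neg fun hk' => h1 ⟨k, hk'⟩
      have s2 : (∑ k, (if y = (fun j => x j - if j = k then (1:ℤ) else 0) then dl k else 0)) = dl i := by
        rw [Finset.sum_eq_single_of_mem i (Finset.mem_univ i)]
        · rw [if_pos hi]
        · exact fun k _ hk => if_neg fun hk' => shock_aux_minus_minus x y i k hk hi hk'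
      have s3 : (∑ k, (if x = (fun j => y j + if j = k then (1:ℤ) else 0) then dr k else 0)) = dr i := by
        rw [Finset.sum_eq_single_of_mem i (Finset.mem_univ i)]
        · rw [if_pos hyx]
        · exact fun k _ hk => if_neg fun hk' => shock_aux_plus_plus y x i k hk hyx hk'
      have s4 : (∑ k, (if x = (fun j => y j - if j = k then (1:ℤ) else 0) then dl k else 0)) = 0 :=
        Finset.sum_eq_zero fun k _ => if_neg fun hk' => shock_aux_plus_minus y x i k hyx hk'
      rw [s1, s2, s3, s4, add_zero, zero_add]
      rw [hyx, hπp y i, mul_assoc, hcancel i]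
    · have z1 : (∑ k, (if y = (fun j => x j + if j = k then (1:ℤ) else 0) then dr k else 0)) = 0 :=
        Finset.sum_eq_zero fun k _ => if_neg fun hk' => h1 ⟨k, hk'⟩
      have z2 : (∑ k, (if y = (fun j => x j - if j = k then (1:ℤ) else 0) then dl k else 0)) = 0 :=
        Finset.sum_eq_zero fun k _ => if_neg fun hk' => h2 ⟨k, hk'⟩
      have z3 : (∑ k, (if x = (fun j => y j + if j = k then (1:ℤ) else 0) then dr k else 0)) = 0 :=
        Finset.sum_eq_zero fun k _ => if_neg fun hk' => h2 ⟨k, (hequiv y x k).mp hk'⟩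
      have z4 : (∑ k, (if x = (fun j => y j - if j = k then (1:ℤ) else 0) then dl k else 0)) = 0 :=
        Finset.sum_eq_zero fun k _ => if_neg fun hk' => h1 ⟨k, (hequiv x y k).mpr hk'⟩
      rw [z1, z2, z3, z4]
      ring
end

section
/- Let W be an intensity matrix of a Markov process with invariant measure π_W having all entries nonzero, and Q an intensity matrix with invariant measure π_Q all nonzero, and suppose RW = QᵀR for some matrix R (reverse duality). Define the reversed intensity matrices W_rev = π̂_W⁻¹ Wᵀ π̂_W and Q_rev = π̂_Q⁻¹ Qᵀ π̂_Q, where π̂ denotes the diagonal matrix of the measure. Then D := π̂_W⁻¹ Rᵀ π̂_Q⁻¹ satisfies the conventional duality relation W_rev D = D Q_revᵀ. -/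
open Matrix
theorem reverse_duality_implies_duality_of_reversed (n m : ℕ)
    (W : Matrix (Fin n) (Fin n) ℝ) (Q : Matrix (Fin m) (Fin m) ℝ)
    (R : Matrix (Fin m) (Fin n) ℝ)
    (πW : Fin n → ℝ) (πQ : Fin m → ℝ)
    (hπW : ∀ i, πW i ≠ 0) (hπQ : ∀ i, πQ i ≠ 0)
    (hWinv : Matrix.vecMul πW W = 0) (hQinv : Matrix.vecMul πQ Q = 0)
    (hRD : R * W = Qᵀ * R)
    (Wrev : Matrix (Fin n) (Fin n) ℝ) (Qrev : Matrix (Fin m) (Fin m) ℝ)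
    (hWrev : Wrev = (Matrix.diagonal πW)⁻¹ * Wᵀ * Matrix.diagonal πW)
    (hQrev : Qrev = (Matrix.diagonal πQ)⁻¹ * Qᵀ * Matrix.diagonal πQ)
    (D : Matrix (Fin n) (Fin m) ℝ)
    (hD : D = (Matrix.diagonal πW)⁻¹ * Rᵀ * (Matrix.diagonal πQ)⁻¹) :
    Wrev * D = D * Qrevᵀ := by
  have hdW : IsUnit (Matrix.diagonal πW).det := by
    simp [Matrix.det_diagonal, Finset.prod_ne_zero_iff, hπW, isUnit_iff_ne_zero]
  have hdQ : IsUnit (Matrix.diagonal πQ).det := by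
    simp [Matrix.det_diagonal, Finset.prod_ne_zero_iff, hπQ, isUnit_iff_ne_zero]
  have h1 : Matrix.diagonal πW * (Matrix.diagonal πW)⁻¹ = 1 := Matrix.mul_nonsing_inv _ hdW
  have h2 : (Matrix.diagonal πQ)⁻¹ * Matrix.diagonal πQ = 1 := Matrix.nonsing_inv_mul _ hdQ
  have key : Wᵀ * Rᵀ = Rᵀ * Q := by
    have := congrArg Matrix.transpose hRD
    simpa [Matrix.transpose_mul] using this
  subst hWrev hQrev hD
  calc (Matrix.diagonal πW)⁻¹ * Wᵀ * Matrix.diagonal πW *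
        ((Matrix.diagonal πW)⁻¹ * Rᵀ * (Matrix.diagonal πQ)⁻¹)
      = (Matrix.diagonal πW)⁻¹ * ((Wᵀ * (Matrix.diagonal πW * (Matrix.diagonal πW)⁻¹)) * Rᵀ) * (Matrix.diagonal πQ)⁻¹ := by
        simp only [Matrix.mul_assoc]
    _ = (Matrix.diagonal πW)⁻¹ * (Rᵀ * Q) * (Matrix.diagonal πQ)⁻¹ := by rw [h1]; simp [key]
    _ = (Matrix.diagonal πW)⁻¹ * Rᵀ * (Matrix.diagonal πQ)⁻¹ *
        ((Matrix.diagonal πQ)ᵀ * Qᵀᵀ * ((Matrix.diagonal πQ)⁻¹)ᵀ) := by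
        rw [Matrix.transpose_transpose, Matrix.transpose_nonsing_inv, Matrix.diagonal_transpose]
        simp only [Matrix.mul_assoc, ← Matrix.mul_assoc (diagonal πQ)⁻¹ (diagonal πQ), h2, Matrix.one_mul]
    _ = (Matrix.diagonal πW)⁻¹ * Rᵀ * (Matrix.diagonal πQ)⁻¹ *
        ((Matrix.diagonal πQ)⁻¹ * Qᵀ * Matrix.diagonal πQ)ᵀ := by
        simp [Matrix.transpose_mul, Matrix.mul_assoc]
end

section
/- For L ≥ 2 and d > 0, d ≠ 1, define for p = 1,…,L−1 the vectors Ψ_p(y) = sqrt(2/L)·ψ_p(y)/(d − e^{−iπp/L}) with ψ_p(y) = d·sin(πp(y+1)/L) − sin(πp·y/L) for y = 0,…,L−1, and Ψ₀(y) = sqrt((d²−1)/(d^{2L}−1))·d^{y}. Then these L vectors satisfy the orthonormality relations Σ_{y=0}^{L−1} Ψ_p(y)·conj(Ψ_q(y)) = δ_{p,q} for all p, q ∈ {0,1,…,L−1}. -/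
namespace RWOrthAux
open Complex Finset

variable {L : ℕ}

noncomputable def w (L : ℕ) : ℂ := Complex.exp ((Real.pi / L : ℝ) * Complex.I)

lemma w_ne_zero : w L ≠ 0 := Complex.exp_ne_zero _

lemma abs_w : ‖w L‖ = 1 := Complex.norm_exp_ofReal_mul_I _

lemma w_pow_L (hL : 0 < L) : (w L) ^ L = -1 := by
  rw [w, ← Complex.exp_nat_mul, ← Complex.exp_pi_mul_I]
  congr 1
  have : (L:ℂ) ≠ 0 := Nat.cast_ne_zero.2 hL.ne'
  push_cast
  field_simp

lemma w_pow_ne_one (hL : 0 < L) {k : ℕ} (hk : 0 < k) (hk2 : k < 2 * L) : (w L) ^ k ≠ 1 := by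
  intro h
  rw [w, ← Complex.exp_nat_mul, Complex.exp_eq_one_iff] at h
  obtain ⟨n, hn⟩ := h
  have hI : ((k * (Real.pi / L) : ℝ) : ℂ) * Complex.I = ((n * (2 * Real.pi) : ℝ) : ℂ) * Complex.I := by
    push_cast
    push_cast at hn
    linear_combination hn
  have h2 : (k * (Real.pi / L) : ℝ) = (n * (2 * Real.pi) : ℝ) := by
    have := mul_right_cancel₀ Complex.I_ne_zero hI
    exact_mod_cast this
  have hLR : (0:ℝ) < L := by exact_mod_cast hL
  have hk' : (k : ℝ) = 2 * n * L := by
    field_simp at h2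
    nlinarith [Real.pi_pos, h2]
  have hn0 : 0 < n := by
    by_contra hn0
    push_neg at hn0
    have : (2 * n * L : ℝ) ≤ 0 := by
      have : (n:ℝ) ≤ 0 := by exact_mod_cast hn0
      nlinarith
    have hk0 : (0:ℝ) < k := by exact_mod_cast hk
    linarith
  have hn1 : (1:ℝ) ≤ n := by exact_mod_cast hn0
  have : (k:ℝ) < 2 * L := by exact_mod_cast hk2
  nlinarith

lemma w_pow_inj (hL : 0 < L) {a b : ℕ} (ha : a < 2*L) (hb : b < 2*L)
    (h : (w L)^a = (w L)^b) : a = b := by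
  rcases le_total a b with hab | hab
  · by_contra hne
    have hlt : 0 < b - a := by omega
    have : (w L)^a * (w L)^(b-a) = (w L)^a * 1 := by
      rw [← pow_add, mul_one, Nat.add_sub_cancel' hab]
      exact h.symm
    have h1 : (w L)^(b-a) = 1 := mul_left_cancel₀ (pow_ne_zero _ w_ne_zero) this
    exact w_pow_ne_one hL hlt (by omega) h1
  · by_contra hne
    have hlt : 0 < a - b := by omega
    have : (w L)^b * (w L)^(a-b) = (w L)^b * 1 := by
      rw [← pow_add, mul_one, Nat.add_sub_cancel' hab]
      exact h
    have h1 : (w L)^(a-b) = 1 := mul_left_cancel₀ (pow_ne_zero _ w_ne_zero) this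
    exact w_pow_ne_one hL hlt (by omega) h1

lemma geom (z : ℂ) (hz : z ≠ 1) :
    ∑ y ∈ range L, z^(y+1) = z * ((z^L - 1) / (z - 1)) := by
  rw [← geom_sum_eq hz, Finset.mul_sum]
  exact Finset.sum_congr rfl fun y _ => (pow_succ' z y)

lemma geomA (z : ℂ) (hz : z ≠ 1) (hzL : z^L = 1) :
    ∑ y ∈ range L, z^(y+1) = 0 := by
  rw [geom z hz, hzL]
  simp

lemma geomB (z : ℂ) (hzL : z^L = -1) :
    ∑ y ∈ range L, z^(y+1) = -2 * z / (z - 1) := by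
  have hz : z ≠ 1 := by
    intro h
    rw [h, one_pow] at hzL
    norm_num at hzL
  rw [geom z hz, hzL]
  ring

lemma hexp (n : ℕ) : Complex.exp ((Real.pi * n / L : ℝ) * Complex.I) = (w L)^n := by
  rw [w, ← Complex.exp_nat_mul]
  congr 1
  push_cast
  ring

lemma hexpneg (n : ℕ) :
    Complex.exp (-Complex.I * Real.pi * n / L) = ((w L)^n)⁻¹ := by
  rw [← hexp n, ← Complex.exp_neg]
  congr 1
  push_cast
  ring

lemma sin_key (x : ℝ) :
    Complex.exp ((x:ℂ) * Complex.I) - (Complex.exp ((x:ℂ) * Complex.I))⁻¹ =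
      2 * Complex.I * Complex.sin (x:ℂ) := by
  rw [← Complex.exp_neg]
  have : -((x:ℂ)*Complex.I) = (-(x:ℂ)) * Complex.I := by ring
  rw [this, Complex.exp_mul_I, Complex.exp_mul_I, Complex.cos_neg, Complex.sin_neg]
  ring

lemma hsin (n : ℕ) :
    (w L)^n - ((w L)^n)⁻¹ = 2 * Complex.I * ((Real.sin (Real.pi * n / L) : ℝ) : ℂ) := by
  rw [Complex.ofReal_sin, ← hexp n]
  exact sin_key _

lemma conj_w : (starRingEnd ℂ) (w L) = (w L)⁻¹ := by
  rw [w, ← Complex.exp_conj, ← Complex.exp_neg]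
  congr 1
  simp [Complex.ext_iff]

lemma psiC (d : ℝ) (ψ : ℕ → ℕ → ℝ)
    (hψ : ∀ p y, ψ p y =
      d * Real.sin (Real.pi * p * (y + 1) / L) - Real.sin (Real.pi * p * y / L))
    (r y : ℕ) :
    ((ψ r y : ℝ) : ℂ) * (2 * Complex.I) =
      ((w L)^r)^(y+1) * ((d:ℂ) - ((w L)^r)⁻¹) - (((w L)^r)^(y+1))⁻¹ * ((d:ℂ) - (w L)^r) := by
  have e1 : Real.pi * (r:ℝ) * ((y:ℝ) + 1) / L = Real.pi * ((r*(y+1) : ℕ) : ℝ) / L := by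
    push_cast; ring
  have e2 : Real.pi * (r:ℝ) * (y:ℝ) / L = Real.pi * ((r*y : ℕ) : ℝ) / L := by
    push_cast; ring
  have h1 := hsin (L:=L) (r*(y+1))
  have h2 := hsin (L:=L) (r*y)
  have hc : (w L)^r * ((w L)^r)⁻¹ = 1 := mul_inv_cancel₀ (pow_ne_zero _ w_ne_zero)
  simp only [pow_mul] at h1 h2
  rw [hψ, e1, e2]
  simp only [Complex.ofReal_sub, Complex.ofReal_mul]
  linear_combination -(d:ℂ) * h1 + h2 + (((w L)^r)^y - (((w L)^r)^y)⁻¹) * hc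

lemma sumPsi (hL : 2 ≤ L) (d : ℝ) (ψ : ℕ → ℕ → ℝ)
    (hψ : ∀ p y, ψ p y =
      d * Real.sin (Real.pi * p * (y + 1) / L) - Real.sin (Real.pi * p * y / L))
    (r s : ℕ) (hr1 : 1 ≤ r) (hr2 : r ≤ L - 1) (hs1 : 1 ≤ s) (hs2 : s ≤ L - 1) :
    ∑ y ∈ range L, ((ψ r y : ℝ) : ℂ) * ((ψ s y : ℝ) : ℂ) =
      (if r = s then 1 else 0) *
        ((L:ℂ)/2 * (((d:ℂ) - (w L)^r) * ((d:ℂ) - ((w L)^r)⁻¹))) := by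
  have hL0 : 0 < L := by omega
  set U : ℂ := (w L)^r with hUdef
  set V : ℂ := (w L)^s with hVdef
  have hU0 : U ≠ 0 := pow_ne_zero _ w_ne_zero
  have hV0 : V ≠ 0 := pow_ne_zero _ w_ne_zero
  clear_value U V
  have hUL : U^L = (-1:ℂ)^r := by rw [hUdef, ← pow_mul, mul_comm, pow_mul, w_pow_L hL0]
  have hVL : V^L = (-1:ℂ)^s := by rw [hVdef, ← pow_mul, mul_comm, pow_mul, w_pow_L hL0]
  have hinvneg : ∀ n : ℕ, ((-1:ℂ)^n)⁻¹ = (-1)^n := by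
    intro n; rw [← inv_pow, inv_neg, inv_one]
  have hy : ∀ y, ((ψ r y : ℝ) : ℂ) * ((ψ s y : ℝ) : ℂ) * (-4) =
      (U*V)^(y+1) * (((d:ℂ)-U⁻¹)*((d:ℂ)-V⁻¹))
      - (U*V⁻¹)^(y+1) * (((d:ℂ)-U⁻¹)*((d:ℂ)-V))
      - (U⁻¹*V)^(y+1) * (((d:ℂ)-U)*((d:ℂ)-V⁻¹))
      + (U⁻¹*V⁻¹)^(y+1) * (((d:ℂ)-U)*((d:ℂ)-V)) := by
    intro y
    have h1 := psiC d ψ hψ r y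
    have h2 := psiC d ψ hψ s y
    rw [← hUdef] at h1
    rw [← hVdef] at h2
    linear_combination (((ψ s y : ℝ) : ℂ) * (2*Complex.I)) * h1
      + (U^(y+1) * ((d:ℂ) - U⁻¹) - (U^(y+1))⁻¹ * ((d:ℂ) - U)) * h2
      + (-4*((ψ r y : ℝ):ℂ)*((ψ s y : ℝ):ℂ)) * Complex.I_sq
  have hsum : (∑ y ∈ range L, ((ψ r y : ℝ) : ℂ) * ((ψ s y : ℝ) : ℂ)) * (-4) =
      (∑ y ∈ range L, (U*V)^(y+1)) * (((d:ℂ)-U⁻¹)*((d:ℂ)-V⁻¹))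
      - (∑ y ∈ range L, (U*V⁻¹)^(y+1)) * (((d:ℂ)-U⁻¹)*((d:ℂ)-V))
      - (∑ y ∈ range L, (U⁻¹*V)^(y+1)) * (((d:ℂ)-U)*((d:ℂ)-V⁻¹))
      + (∑ y ∈ range L, (U⁻¹*V⁻¹)^(y+1)) * (((d:ℂ)-U)*((d:ℂ)-V)) := by
    rw [Finset.sum_mul]
    rw [Finset.sum_congr rfl (fun y _ => hy y)]
    simp only [Finset.sum_add_distrib, Finset.sum_sub_distrib, ← Finset.sum_mul]
  rcases eq_or_ne r s with hrs | hrs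
  · subst hrs
    rw [if_pos rfl]
    rw [hVdef.trans hUdef.symm] at hsum
    have hUU : U * U = (w L)^(r+r) := by rw [hUdef, ← pow_add]
    have hUUne : U * U ≠ 1 := by
      rw [hUU]; exact w_pow_ne_one hL0 (by omega) (by omega)
    have hUUL : (U*U)^L = 1 := by
      rw [mul_pow, hUL, ← pow_add]
      exact Even.neg_one_pow ⟨r, by ring⟩
    have hI1 : ∑ y ∈ range L, (U*U)^(y+1) = 0 := geomA _ hUUne hUUL
    have hI2 : ∑ y ∈ range L, (U⁻¹*U⁻¹)^(y+1) = 0 := by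
      apply geomA
      · rw [← mul_inv]; exact fun h => hUUne (by rwa [inv_eq_one] at h)
      · rw [← mul_inv, inv_pow, hUUL, inv_one]
    have hI3 : ∑ y ∈ range L, (U*U⁻¹)^(y+1) = (L:ℂ) := by
      rw [mul_inv_cancel₀ hU0]
      simp
    have hI4 : ∑ y ∈ range L, (U⁻¹*U)^(y+1) = (L:ℂ) := by
      rw [inv_mul_cancel₀ hU0]
      simp
    rw [hI1, hI2, hI3, hI4] at hsum
    linear_combination (-1/4 : ℂ) * hsum
  · rw [if_neg hrs, zero_mul]
    have hrL : r < 2*L := by omega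
    have hsL : s < 2*L := by omega
    have hUVne : U * V ≠ 1 := by
      rw [hUdef, hVdef, ← pow_add]
      exact w_pow_ne_one hL0 (by omega) (by omega)
    have hUne : U ≠ V := fun h => hrs (w_pow_inj hL0 hrL hsL (by rw [← hUdef, ← hVdef]; exact h))
    have hUVine : U * V⁻¹ ≠ 1 := by
      intro h
      exact hUne (by field_simp at h; exact h)
    have hViUne : U⁻¹ * V ≠ 1 := by
      intro h
      exact hUne (by field_simp at h; exact h.symm)
    have hUVi2 : U⁻¹ * V⁻¹ ≠ 1 := by
      rw [← mul_inv]; exact fun h => hUVne (by rwa [inv_eq_one] at h)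
    rcases Nat.even_or_odd (r+s) with hpar | hpar
    · have e1 : (U*V)^L = 1 := by
        rw [mul_pow, hUL, hVL, ← pow_add]; exact hpar.neg_one_pow
      have e2 : (U*V⁻¹)^L = 1 := by
        rw [mul_pow, inv_pow, hUL, hVL, hinvneg, ← pow_add]; exact hpar.neg_one_pow
      have e3 : (U⁻¹*V)^L = 1 := by
        rw [mul_pow, inv_pow, hUL, hVL, hinvneg, ← pow_add]; exact hpar.neg_one_pow
      have e4 : (U⁻¹*V⁻¹)^L = 1 := by
        rw [mul_pow, inv_pow, inv_pow, hUL, hVL, hinvneg, hinvneg, ← pow_add]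
        exact hpar.neg_one_pow
      rw [geomA _ hUVne e1, geomA _ hUVine e2, geomA _ hViUne e3, geomA _ hUVi2 e4] at hsum
      linear_combination (-1/4 : ℂ) * hsum
    · have e1 : (U*V)^L = -1 := by
        rw [mul_pow, hUL, hVL, ← pow_add]; exact hpar.neg_one_pow
      have e2 : (U*V⁻¹)^L = -1 := by
        rw [mul_pow, inv_pow, hUL, hVL, hinvneg, ← pow_add]; exact hpar.neg_one_pow
      have e3 : (U⁻¹*V)^L = -1 := by
        rw [mul_pow, inv_pow, hUL, hVL, hinvneg, ← pow_add]; exact hpar.neg_one_pow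
      have e4 : (U⁻¹*V⁻¹)^L = -1 := by
        rw [mul_pow, inv_pow, inv_pow, hUL, hVL, hinvneg, hinvneg, ← pow_add]
        exact hpar.neg_one_pow
      rw [geomB _ e1, geomB _ e2, geomB _ e3, geomB _ e4] at hsum
      have hz1 : U*V - 1 ≠ 0 := sub_ne_zero.2 hUVne
      have hz2 : U*V⁻¹ - 1 ≠ 0 := sub_ne_zero.2 hUVine
      have hz3 : U⁻¹*V - 1 ≠ 0 := sub_ne_zero.2 hViUne
      have hz4 : U⁻¹*V⁻¹ - 1 ≠ 0 := sub_ne_zero.2 hUVi2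
      have hUmV : U - V ≠ 0 := sub_ne_zero.2 hUne
      have hVmU : V - U ≠ 0 := sub_ne_zero.2 (Ne.symm hUne)
      have h1UV : (1:ℂ) - U*V ≠ 0 := fun h => hUVne (by linear_combination -h)
      have f2 : -2 * (U*V⁻¹) / (U*V⁻¹-1) = -2*U/(U-V) := by
        rw [div_eq_div_iff hz2 hUmV]
        field_simp
      have f3 : -2 * (U⁻¹*V) / (U⁻¹*V-1) = -2*V/(V-U) := by
        rw [div_eq_div_iff hz3 hVmU]
        field_simp
      have f4 : -2 * (U⁻¹*V⁻¹) / (U⁻¹*V⁻¹-1) = -2/(1-U*V) := by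
        rw [div_eq_div_iff hz4 h1UV]
        field_simp
      rw [f2, f3, f4] at hsum
      have tA : U*V*(((d:ℂ)-U⁻¹)*((d:ℂ)-V⁻¹)) - ((d:ℂ)-U)*((d:ℂ)-V)
          = ((d:ℂ)^2-1)*(U*V-1) := by
        field_simp
        try ring
      have tB : U*(((d:ℂ)-U⁻¹)*((d:ℂ)-V)) - V*(((d:ℂ)-U)*((d:ℂ)-V⁻¹))
          = ((d:ℂ)^2-1)*(U-V) := by
        field_simp
        try ring
      have m1 : -2*(U*V)/(U*V-1) * (U*V-1) = -2*(U*V) := div_mul_cancel₀ _ hz1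
      have m2 : -2*U/(U-V) * (U-V) = -2*U := div_mul_cancel₀ _ hUmV
      have m3 : -2*V/(V-U) * (V-U) = -2*V := div_mul_cancel₀ _ hVmU
      have m4 : -2/(1-U*V) * (1-U*V) = -2 := div_mul_cancel₀ _ h1UV
      have hzero : (∑ y ∈ range L, ((ψ r y : ℝ):ℂ) * ((ψ s y : ℝ):ℂ)) * (-4)
          * ((U*V-1)*(U-V)) = 0 := by
        rw [hsum]
        linear_combination ((((d:ℂ)-U⁻¹)*((d:ℂ)-V⁻¹))*(U-V))*m1
          - ((((d:ℂ)-U⁻¹)*((d:ℂ)-V))*(U*V-1))*m2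
          + ((((d:ℂ)-U)*((d:ℂ)-V⁻¹))*(U*V-1))*m3
          - ((((d:ℂ)-U)*((d:ℂ)-V))*(U-V))*m4
          + (-2*(U-V))*tA + (2*(U*V-1))*tB
      have h4 : ((-4:ℂ) * ((U*V-1)*(U-V))) ≠ 0 :=
        mul_ne_zero (by norm_num) (mul_ne_zero hz1 hUmV)
      have hz' : (∑ y ∈ range L, ((ψ r y : ℝ):ℂ) * ((ψ s y : ℝ):ℂ))
          * ((-4:ℂ) * ((U*V-1)*(U-V))) = 0 := by linear_combination hzero
      exact (mul_eq_zero.mp hz').resolve_right h4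

lemma htel (hL : 0 < L) (d : ℝ) (ψ : ℕ → ℕ → ℝ)
    (hψ : ∀ p y, ψ p y =
      d * Real.sin (Real.pi * p * (y + 1) / L) - Real.sin (Real.pi * p * y / L))
    (s : ℕ) : ∑ y ∈ range L, d^y * ψ s y = 0 := by
  have key : ∀ y ∈ range L, d^y * ψ s y =
      (fun t : ℕ => d^t * Real.sin (Real.pi * s * t / L)) (y+1)
      - (fun t : ℕ => d^t * Real.sin (Real.pi * s * t / L)) y := by
    intro y _
    simp only [hψ]
    push_cast
    ring
  rw [Finset.sum_congr rfl key,
    Finset.sum_range_sub (fun t : ℕ => d^t * Real.sin (Real.pi * s * t / L)) L]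
  have hLne : (L:ℝ) ≠ 0 := Nat.cast_ne_zero.2 hL.ne'
  have e1 : Real.pi * s * (L:ℝ) / L = s * Real.pi := by field_simp
  have e2 : Real.pi * s * ((0:ℕ):ℝ) / L = 0 := by norm_num
  simp only [e1, e2, Real.sin_nat_mul_pi, Real.sin_zero, mul_zero, sub_zero, pow_zero]

lemma geo0 {d : ℝ} (hd : 0 < d) (hd1 : d ≠ 1) :
    ∑ y ∈ range L, d^y * d^y = (d^(2*L) - 1) / (d^2 - 1) := by
  have hd2 : d^2 ≠ 1 := by
    intro h
    have h0 : (d-1)*(d+1) = 0 := by nlinarith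
    rcases mul_eq_zero.mp h0 with h'|h'
    · exact hd1 (by linarith)
    · linarith
  have : ∀ y ∈ range L, d^y * d^y = (d^2)^y := by
    intro y _
    rw [← pow_mul, two_mul, pow_add]
  rw [Finset.sum_congr rfl this, geom_sum_eq hd2, ← pow_mul]

lemma dSubNe {d : ℝ} (hd : 0 < d) (hd1 : d ≠ 1) (z : ℂ) (hz : ‖z‖ = 1) :
    (d:ℂ) - z ≠ 0 := by
  intro h
  have hz' : z = (d:ℂ) := by linear_combination -h
  rw [hz', Complex.norm_real, Real.norm_eq_abs, abs_of_pos hd] at hz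
  exact hd1 hz

lemma conj_exp_neg (L q : ℕ) :
    (starRingEnd ℂ) (Complex.exp (-Complex.I * Real.pi * q / L)) = (w L)^q := by
  rw [hexpneg, map_inv₀, map_pow, conj_w, inv_pow, inv_inv]

end RWOrthAux

open Complex in
theorem rw_eigenvectors_orthonormal (L : ℕ) (hL : 2 ≤ L)
    (d : ℝ) (hd : 0 < d) (hd1 : d ≠ 1)
    (ψ : ℕ → ℕ → ℝ)
    (hψ : ∀ p y, ψ p y =
      d * Real.sin (Real.pi * p * (y + 1) / L) - Real.sin (Real.pi * p * y / L))
    (Ψ : ℕ → ℕ → ℂ)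
    (hΨ0 : ∀ y, Ψ 0 y = (Real.sqrt ((d^2 - 1) / (d^(2*L) - 1)) * d^y : ℝ))
    (hΨ : ∀ p y, 1 ≤ p → p ≤ L - 1 →
      Ψ p y = (Real.sqrt (2 / L) * ψ p y : ℝ) /
        ((d : ℂ) - Complex.exp (-Complex.I * Real.pi * p / L))) :
    ∀ p q, p ≤ L - 1 → q ≤ L - 1 →
      ∑ y ∈ Finset.range L, Ψ p y * (starRingEnd ℂ) (Ψ q y) =
      if p = q then 1 else 0 := by
  intro p q hp hq
  have hL0 : 0 < L := by omega
  rcases Nat.eq_zero_or_pos p with hp0 | hp1 <;> rcases Nat.eq_zero_or_pos q with hq0 | hq1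
  · -- p = 0, q = 0
    subst hp0; subst hq0
    rw [if_pos rfl]
    obtain ⟨hnum, hden, hc⟩ : (d^2 - 1 ≠ 0) ∧ (d^(2*L) - 1 ≠ 0) ∧
        0 ≤ (d^2-1)/(d^(2*L)-1) := by
      rcases hd1.lt_or_gt with h|h
      · have h2 : d^2 < 1 := by nlinarith
        have h2L : d^(2*L) < 1 := pow_lt_one₀ hd.le h (by omega)
        exact ⟨by nlinarith, by nlinarith,
          div_nonneg_iff.mpr (Or.inr ⟨by linarith, by linarith⟩)⟩
      · have h2 : 1 < d^2 := by nlinarith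
        have h2L : 1 < d^(2*L) := one_lt_pow₀ h (by omega)
        exact ⟨by nlinarith, by nlinarith, div_nonneg (by linarith) (by linarith)⟩
    have key : ∀ y ∈ Finset.range L, Ψ 0 y * (starRingEnd ℂ) (Ψ 0 y) =
        (((Real.sqrt ((d^2-1)/(d^(2*L)-1)) * d^y) *
          (Real.sqrt ((d^2-1)/(d^(2*L)-1)) * d^y) : ℝ) : ℂ) := by
      intro y _
      rw [hΨ0 y, Complex.conj_ofReal, ← Complex.ofReal_mul]
    rw [Finset.sum_congr rfl key, ← Complex.ofReal_sum]
    have hreal : ∑ y ∈ Finset.range L,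
        ((Real.sqrt ((d^2-1)/(d^(2*L)-1)) * d^y) *
          (Real.sqrt ((d^2-1)/(d^(2*L)-1)) * d^y)) = 1 := by
      have e : ∀ y ∈ Finset.range L,
          (Real.sqrt ((d^2-1)/(d^(2*L)-1)) * d^y) *
            (Real.sqrt ((d^2-1)/(d^(2*L)-1)) * d^y)
          = ((d^2-1)/(d^(2*L)-1)) * (d^y * d^y) := by
        intro y _
        calc (Real.sqrt ((d^2-1)/(d^(2*L)-1)) * d^y) *
              (Real.sqrt ((d^2-1)/(d^(2*L)-1)) * d^y)
            = (Real.sqrt ((d^2-1)/(d^(2*L)-1)) * Real.sqrt ((d^2-1)/(d^(2*L)-1)))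
              * (d^y * d^y) := by ring
          _ = ((d^2-1)/(d^(2*L)-1)) * (d^y * d^y) := by rw [Real.mul_self_sqrt hc]
      rw [Finset.sum_congr rfl e, ← Finset.mul_sum, RWOrthAux.geo0 hd hd1,
        div_mul_div_comm, div_eq_one_iff_eq (mul_ne_zero hden hnum)]
      ring
    rw [hreal, Complex.ofReal_one]
  · -- p = 0, q ≥ 1
    subst hp0
    rw [if_neg (by omega)]
    have key : ∀ y ∈ Finset.range L, Ψ 0 y * (starRingEnd ℂ) (Ψ q y) =
        (((Real.sqrt ((d^2-1)/(d^(2*L)-1)) : ℝ) : ℂ) * ((Real.sqrt (2/L) : ℝ) : ℂ)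
          / ((d:ℂ) - (RWOrthAux.w L)^q)) * ((d^y * ψ q y : ℝ) : ℂ) := by
      intro y _
      rw [hΨ0 y, hΨ q y hq1 hq, map_div₀, map_sub, Complex.conj_ofReal,
        Complex.conj_ofReal, RWOrthAux.conj_exp_neg]
      push_cast
      ring
    rw [Finset.sum_congr rfl key, ← Finset.mul_sum, ← Complex.ofReal_sum,
      RWOrthAux.htel hL0 d ψ hψ q, Complex.ofReal_zero, mul_zero]
  · -- p ≥ 1, q = 0
    subst hq0
    rw [if_neg (by omega)]
    have key : ∀ y ∈ Finset.range L, Ψ p y * (starRingEnd ℂ) (Ψ 0 y) =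
        (((Real.sqrt (2/L) : ℝ) : ℂ) * ((Real.sqrt ((d^2-1)/(d^(2*L)-1)) : ℝ) : ℂ)
          / ((d:ℂ) - ((RWOrthAux.w L)^p)⁻¹)) * ((d^y * ψ p y : ℝ) : ℂ) := by
      intro y _
      rw [hΨ p y hp1 hp, hΨ0 y, Complex.conj_ofReal, RWOrthAux.hexpneg]
      push_cast
      ring
    rw [Finset.sum_congr rfl key, ← Finset.mul_sum, ← Complex.ofReal_sum,
      RWOrthAux.htel hL0 d ψ hψ p, Complex.ofReal_zero, mul_zero]
  · -- p ≥ 1, q ≥ 1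
    have hdq : (d:ℂ) - (RWOrthAux.w L)^q ≠ 0 :=
      RWOrthAux.dSubNe hd hd1 _ (by rw [norm_pow, RWOrthAux.abs_w, one_pow])
    have hdp : (d:ℂ) - (RWOrthAux.w L)^p ≠ 0 :=
      RWOrthAux.dSubNe hd hd1 _ (by rw [norm_pow, RWOrthAux.abs_w, one_pow])
    have hdpi : (d:ℂ) - ((RWOrthAux.w L)^p)⁻¹ ≠ 0 :=
      RWOrthAux.dSubNe hd hd1 _
        (by rw [norm_inv, norm_pow, RWOrthAux.abs_w, one_pow, inv_one])
    have key : ∀ y ∈ Finset.range L, Ψ p y * (starRingEnd ℂ) (Ψ q y) =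
        (((Real.sqrt (2/L) : ℝ) : ℂ) * ((Real.sqrt (2/L) : ℝ) : ℂ)
          / (((d:ℂ) - ((RWOrthAux.w L)^p)⁻¹) * ((d:ℂ) - (RWOrthAux.w L)^q)))
          * (((ψ p y : ℝ) : ℂ) * ((ψ q y : ℝ) : ℂ)) := by
      intro y _
      rw [hΨ p y hp1 hp, hΨ q y hq1 hq, map_div₀, map_sub, Complex.conj_ofReal,
        Complex.conj_ofReal, RWOrthAux.conj_exp_neg, RWOrthAux.hexpneg,
        div_mul_div_comm, div_mul_eq_mul_div]
      congr 1
      push_cast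
      ring
    rw [Finset.sum_congr rfl key, ← Finset.mul_sum,
      RWOrthAux.sumPsi hL d ψ hψ p q hp1 hp hq1 hq]
    have hsq : ((Real.sqrt (2/L) : ℝ) : ℂ) * ((Real.sqrt (2/L) : ℝ) : ℂ)
        = ((2/L : ℝ) : ℂ) := by
      rw [← Complex.ofReal_mul, Real.mul_self_sqrt (by positivity)]
    rw [hsq]
    by_cases hpq : p = q
    · subst hpq
      rw [if_pos rfl]
      have hLC : (L:ℂ) ≠ 0 := Nat.cast_ne_zero.2 hL0.ne'
      have hcL : (L:ℂ) * (L:ℂ)⁻¹ = 1 := mul_inv_cancel₀ hLC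
      rw [div_mul_eq_mul_div, div_eq_one_iff_eq (mul_ne_zero hdpi hdp)]
      push_cast
      linear_combination (((d:ℂ) - RWOrthAux.w L ^ p) *
        ((d:ℂ) - (RWOrthAux.w L ^ p)⁻¹)) * hcL
    · rw [if_neg hpq]
      ring
end
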